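/- arXiv:1703.02424 — 2 statements merged into one kernel-verified Lean document; each statement's English description precedes it below -/
import Mathlib

section
/- Let h : ℝⁿ × ℝᵐ → ℝ be C², let y* : ℝⁿ → ℝᵐ be C¹ with ∇_y h(x, y*(x)) = 0 for all x, and define H(x) = h(x, y*(x)). Then the Hessian of H at x equals [I; Dy*(x)]ᵀ · ∇²h(x, y*(x)) · [I; Dy*(x)], where ∇²h is the full Hessian of h in (x,y). In particular, if ∇²h(x, y*(x)) is positive semidefinite then ∇²H(x) is positive semidefinite. -/
/-!
Since `∂_y h` vanishes along the graph `x ↦ (x, y* x)`, the chain rule gives the envelope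
formula `DH x = ∂_x h (x, y* x)`. Differentiating once more, `D²H x u = D²h w ∘ inl` with
`w = (u, Dy* x u)`; differentiating the identity `∂_y h (x, y* x) = 0` shows `D²h w ∘ inr = 0`, so
`D²H x u u = D²h w (u, 0) = D²h w (u, 0) + D²h w (0, Dy* x u) = D²h w w`.
-/

open ContinuousLinearMap

variable {𝕜 E F G : Type*} [NontriviallyNormedField 𝕜] [NormedAddCommGroup E] [NormedSpace 𝕜 E]
  [NormedAddCommGroup F] [NormedSpace 𝕜 F] [NormedAddCommGroup G] [NormedSpace 𝕜 G]

theorem ContinuousLinearMap.comp_id_prod_eq_comp_inl {L : E × F →L[𝕜] G}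
    (hL : L.comp (inr 𝕜 E F) = 0) (A : E →L[𝕜] F) :
    L.comp ((ContinuousLinearMap.id 𝕜 E).prod A) = L.comp (inl 𝕜 E F) := by
  ext v
  have hL' : L (0, A v) = 0 := by simpa using congr($hL (A v))
  calc L (v, A v) = L ((v, 0) + (0, A v)) := by simp
    _ = L (v, 0) := by rw [map_add, hL', add_zero]

theorem fderiv_comp_prodMk_right {h : E × F → G} {x : E} {y : F}
    (hh : DifferentiableAt 𝕜 h (x, y)) :
    fderiv 𝕜 (fun y => h (x, y)) y = (fderiv 𝕜 h (x, y)).comp (inr 𝕜 E F) :=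
  (hh.hasFDerivAt.comp y (hasFDerivAt_prodMk_right x y)).fderiv

theorem HasFDerivAt.apply_comp_eq_zero_of_forall_comp_eq_zero
    {H : Type*} [NormedAddCommGroup H] [NormedSpace 𝕜 H]
    {Φ : E → F →L[𝕜] G} {Φ' : E →L[𝕜] F →L[𝕜] G} {x : E} (hΦ : HasFDerivAt Φ Φ' x)
    {C : H →L[𝕜] F} (hC : ∀ x, (Φ x).comp C = 0) (u : E) : (Φ' u).comp C = 0 := by
  have hcomp := hΦ.clm_comp (hasFDerivAt_const C x)
  simp only [hC] at hcomp
  simpa using congr($(hcomp.unique (hasFDerivAt_const 0 x)) u)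

theorem hasFDerivAt_comp_graph_of_fderiv_right_eq_zero {h : E × F → G} {y : E → F} {x : E}
    (hh : DifferentiableAt 𝕜 h (x, y x)) (hy : DifferentiableAt 𝕜 y x)
    (hcrit : fderiv 𝕜 (fun z => h (x, z)) (y x) = 0) :
    HasFDerivAt (fun x => h (x, y x)) ((fderiv 𝕜 h (x, y x)).comp (inl 𝕜 E F)) x := by
  rw [fderiv_comp_prodMk_right hh] at hcrit
  rw [← comp_id_prod_eq_comp_inl hcrit (fderiv 𝕜 y x)]
  exact hh.hasFDerivAt.comp x ((hasFDerivAt_id x).prodMk hy.hasFDerivAt)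

theorem fderiv_fderiv_comp_graph_apply_self_of_fderiv_right_eq_zero {h : E × F → G} {y : E → F}
    (hh : Differentiable 𝕜 h) (hy : Differentiable 𝕜 y)
    (hcrit : ∀ x, fderiv 𝕜 (fun z => h (x, z)) (y x) = 0) {x : E}
    (hh' : DifferentiableAt 𝕜 (fderiv 𝕜 h) (x, y x)) (u : E) :
    fderiv 𝕜 (fderiv 𝕜 (fun x => h (x, y x))) x u u =
      fderiv 𝕜 (fderiv 𝕜 h) (x, y x) (u, fderiv 𝕜 y x u) (u, fderiv 𝕜 y x u) := by
  have hfderiv :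
      fderiv 𝕜 (fun x => h (x, y x)) = fun x => (fderiv 𝕜 h (x, y x)).comp (inl 𝕜 E F) :=
    funext fun x => (hasFDerivAt_comp_graph_of_fderiv_right_eq_zero (hh _) (hy x) (hcrit x)).fderiv
  have hΦ : HasFDerivAt (fun x => fderiv 𝕜 h (x, y x))
      ((fderiv 𝕜 (fderiv 𝕜 h) (x, y x)).comp
        ((ContinuousLinearMap.id 𝕜 E).prod (fderiv 𝕜 y x))) x :=
    hh'.hasFDerivAt.comp x ((hasFDerivAt_id x).prodMk (hy x).hasFDerivAt)
  set B := fderiv 𝕜 (fderiv 𝕜 h) (x, y x) (u, fderiv 𝕜 y x u)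
  have hB : B.comp (inr 𝕜 E F) = 0 := by
    simpa using hΦ.apply_comp_eq_zero_of_forall_comp_eq_zero
      (fun x => (fderiv_comp_prodMk_right (hh _)).symm.trans (hcrit x)) u
  have hD : fderiv 𝕜 (fderiv 𝕜 (fun x => h (x, y x))) x u = B.comp (inl 𝕜 E F) := by
    rw [hfderiv, (hΦ.clm_comp (hasFDerivAt_const _ x)).fderiv]
    simp [B]
  simpa [hD] using congr($(comp_id_prod_eq_comp_inl hB (fderiv 𝕜 y x)) u).symm

theorem stmt_5 (n m : ℕ)
    (h : (EuclideanSpace ℝ (Fin n)) × (EuclideanSpace ℝ (Fin m)) → ℝ)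
    (hh : ContDiff ℝ 2 h)
    (ystar : EuclideanSpace ℝ (Fin n) → EuclideanSpace ℝ (Fin m))
    (hy : ContDiff ℝ 1 ystar)
    (hcrit : ∀ x : EuclideanSpace ℝ (Fin n),
      fderiv ℝ (fun y => h (x, y)) (ystar x) = 0)
    (H : EuclideanSpace ℝ (Fin n) → ℝ) (hH : ∀ x, H x = h (x, ystar x)) :
    ∀ x : EuclideanSpace ℝ (Fin n),
      (∀ u : EuclideanSpace ℝ (Fin n),
        iteratedFDeriv ℝ 2 H x ![u, u] =
          iteratedFDeriv ℝ 2 h (x, ystar x)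
            ![(u, fderiv ℝ ystar x u), (u, fderiv ℝ ystar x u)]) ∧
      ((∀ z : (EuclideanSpace ℝ (Fin n)) × (EuclideanSpace ℝ (Fin m)),
          0 ≤ iteratedFDeriv ℝ 2 h (x, ystar x) ![z, z]) →
        ∀ u : EuclideanSpace ℝ (Fin n), 0 ≤ iteratedFDeriv ℝ 2 H x ![u, u]) := by
  intro x
  have hfderiv_h : Differentiable ℝ (fderiv ℝ h) :=
    (hh.fderiv_right (m := 1) le_rfl).differentiable one_ne_zero
  have hquad (u : EuclideanSpace ℝ (Fin n)) : iteratedFDeriv ℝ 2 H x ![u, u] =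
      iteratedFDeriv ℝ 2 h (x, ystar x) ![(u, fderiv ℝ ystar x u), (u, fderiv ℝ ystar x u)] := by
    simp only [iteratedFDeriv_two_apply, Matrix.cons_val_zero, Matrix.cons_val_one, funext hH]
    exact fderiv_fderiv_comp_graph_apply_self_of_fderiv_right_eq_zero
      (hh.differentiable two_ne_zero) (hy.differentiable one_ne_zero) hcrit (hfderiv_h _) u
  exact ⟨hquad, fun hpos u => hquad u ▸ hpos _⟩
end

section
/- Let M be a positive definite diagonal n×n real matrix and T : ℝⁿ → ℝⁿ a C¹ map with fixed point p (T(p) = p), and suppose ∇²H(p) = 2M(I − ∇T(p)) is symmetric. If some eigenvalue of ∇T(p) is real and greater than 1, then ∇²H(p) has a negative eigenvalue, so p is a saddle point (not a local minimum) of H. -/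
/-!
Along an eigenvector `v` of `J` with eigenvalue `μ > 1`, the quadratic form of `2 M (I - J)` is
`2 (1 - μ) vᵀ M v < 0` because `M` is positive definite. A symmetric matrix whose quadratic form
takes a negative value cannot be positive semidefinite, so one of its eigenvalues is negative.
-/

open Matrix

namespace Matrix

variable {n : Type*} [Fintype n] [DecidableEq n]

theorem mul_one_sub_mulVec_of_mulVec_eq_smul {R : Type*} [CommRing R] (M J : Matrix n n R)
    {μ : R} {v : n → R} (hv : J *ᵥ v = μ • v) :
    (M * (1 - J)) *ᵥ v = (1 - μ) • M *ᵥ v := by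
  rw [← mulVec_mulVec, sub_mulVec, one_mulVec, hv, mulVec_sub, mulVec_smul, sub_smul, one_smul]

theorem IsHermitian.exists_neg_eigenvalue_of_dotProduct_mulVec_neg {A : Matrix n n ℝ}
    (hA : A.IsHermitian) {v : n → ℝ} (hv : v ⬝ᵥ A *ᵥ v < 0) :
    ∃ lam : ℝ, lam < 0 ∧ ∃ w : n → ℝ, w ≠ 0 ∧ A *ᵥ w = lam • w := by
  by_contra! hnoneg
  have hPSD : A.PosSemidef := hA.posSemidef_iff_eigenvalues_nonneg.mpr fun i =>
    not_lt.mp fun hi => hnoneg _ hi _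
      (by simpa using hA.eigenvectorBasis.orthonormal.ne_zero i) (hA.mulVec_eigenvectorBasis i)
  simpa using (hPSD.dotProduct_mulVec_nonneg v).trans_lt hv

end Matrix

theorem stmt_18_general (n : ℕ) (d : Fin n → ℝ) (hd : ∀ i, 0 < d i)
    (M : Matrix (Fin n) (Fin n) ℝ) (hM : M = Matrix.diagonal d)
    (J : Matrix (Fin n) (Fin n) ℝ)
    (Hm : Matrix (Fin n) (Fin n) ℝ) (hHm : Hm = (2 : ℝ) • (M * (1 - J)))
    (hsym : Hm.IsSymm)
    (hev : ∃ μ : ℝ, 1 < μ ∧ ∃ v : Fin n → ℝ, v ≠ 0 ∧ J.mulVec v = μ • v) :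
    ∃ lam : ℝ, lam < 0 ∧ ∃ w : Fin n → ℝ, w ≠ 0 ∧ Hm.mulVec w = lam • w := by
  obtain ⟨μ, hμ, v, hv, hJv⟩ := hev
  have hHerm : Hm.IsHermitian := by
    rwa [IsHermitian, conjTranspose_eq_transpose_of_trivial]
  have hMv : 0 < v ⬝ᵥ M *ᵥ v := by
    simpa [hM] using (PosDef.diagonal hd).dotProduct_mulVec_pos hv
  have hQv : v ⬝ᵥ Hm *ᵥ v = 2 * (1 - μ) * (v ⬝ᵥ M *ᵥ v) := by
    rw [hHm, smul_mulVec, mul_one_sub_mulVec_of_mulVec_eq_smul M J hJv, dotProduct_smul,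
      dotProduct_smul, smul_eq_mul, smul_eq_mul, mul_assoc]
  refine hHerm.exists_neg_eigenvalue_of_dotProduct_mulVec_neg (v := v) ?_
  rw [hQv]
  exact mul_neg_of_neg_of_pos (by linarith) hMv

theorem stmt_18 (n : ℕ) (d : Fin n → ℝ) (hd : ∀ i, 0 < d i)
    (M : Matrix (Fin n) (Fin n) ℝ) (hM : M = Matrix.diagonal d)
    (T : EuclideanSpace ℝ (Fin n) → EuclideanSpace ℝ (Fin n))
    (hT : ContDiff ℝ 1 T) (p : EuclideanSpace ℝ (Fin n)) (hfix : T p = p)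
    (J : Matrix (Fin n) (Fin n) ℝ)
    (hJ : ∀ v : EuclideanSpace ℝ (Fin n), Matrix.toEuclideanLin J v = fderiv ℝ T p v)
    (Hm : Matrix (Fin n) (Fin n) ℝ) (hHm : Hm = (2 : ℝ) • (M * (1 - J)))
    (hsym : Hm.IsSymm)
    (hev : ∃ μ : ℝ, 1 < μ ∧ ∃ v : Fin n → ℝ, v ≠ 0 ∧ J.mulVec v = μ • v) :
    ∃ lam : ℝ, lam < 0 ∧ ∃ w : Fin n → ℝ, w ≠ 0 ∧ Hm.mulVec w = lam • w :=
  stmt_18_general n d hd M hM J Hm hHm hsym hev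
end
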